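/- Let ρ ≥ 0 and let γ ∈ (0, 3/4). For every T > 0 there exists a constant C > 0 (depending only on γ, ρ and T) such that for all t, t̄ with 0 < t ≤ t̄ ≤ T and all x, x̄ ∈ [0,1], ∫₀ᵗ ∫₀¹ |H_{t−s}(x,y) − H_{t̄−s}(x̄,y)|² dy ds ≤ C · (|t − t̄|^{γ} + |x − x̄|²). -/

import Mathlib

open Real MeasureTheory
open scoped ENNReal NNReal
set_option maxHeartbeats 1000000

/-- The Green's function of `-∂_x⁴ + ρ∂_x²` on `[0,1]` with Neumann boundary conditions:
`H_t(x,y) = 1 + 2 ∑_{k=1}^∞ e^{-(k⁴π⁴ + ρk²π²)t} cos(kπx) cos(kπy)`. -/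
noncomputable def Hker (ρ t x y : ℝ) : ℝ :=
  1 + 2 * ∑' k : ℕ,
      Real.exp (-(((k + 1 : ℝ) ^ 4 * π ^ 4 + ρ * (k + 1 : ℝ) ^ 2 * π ^ 2) * t)) *
        Real.cos ((k + 1 : ℝ) * π * x) * Real.cos ((k + 1 : ℝ) * π * y)

namespace FourthKernelAux


/-- The eigenvalue `λ_k = (k+1)⁴π⁴ + ρ(k+1)²π²`. -/
noncomputable def lam (ρ : ℝ) (k : ℕ) : ℝ :=
  ((k : ℝ) + 1) ^ 4 * π ^ 4 + ρ * ((k : ℝ) + 1) ^ 2 * π ^ 2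

lemma one_le_k1 (k : ℕ) : (1 : ℝ) ≤ (k : ℝ) + 1 := by
  have : (0 : ℝ) ≤ (k : ℝ) := Nat.cast_nonneg k
  linarith

lemma lam_lb {ρ : ℝ} (hρ : 0 ≤ ρ) (k : ℕ) : π ^ 4 * ((k : ℝ) + 1) ^ 4 ≤ lam ρ k := by
  have h1 : (0 : ℝ) ≤ ((k : ℝ) + 1) ^ 2 := by positivity
  have h2 : (0 : ℝ) ≤ π ^ 2 := by positivity
  have : 0 ≤ ρ * ((k : ℝ) + 1) ^ 2 * π ^ 2 := by positivity
  simp only [lam]; nlinarith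

lemma lam_pos {ρ : ℝ} (hρ : 0 ≤ ρ) (k : ℕ) : 0 < lam ρ k := by
  have h := lam_lb hρ k
  have h1 : (0 : ℝ) < π ^ 4 * ((k : ℝ) + 1) ^ 4 := by
    have := one_le_k1 k
    have := pi_pos
    positivity
  linarith

lemma lam_lb' {ρ : ℝ} (hρ : 0 ≤ ρ) (k : ℕ) : π ^ 4 * ((k : ℝ) + 1) ≤ lam ρ k := by
  refine le_trans ?_ (lam_lb hρ k)
  have h1 : (1 : ℝ) ≤ (k : ℝ) + 1 := one_le_k1 k
  have h2 : ((k : ℝ) + 1) ≤ ((k : ℝ) + 1) ^ 4 := le_self_pow₀ (by linarith) (by norm_num)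
  have h3 : (0 : ℝ) ≤ π ^ 4 := by positivity
  nlinarith

lemma exp_lam_le {ρ : ℝ} (hρ : 0 ≤ ρ) {u : ℝ} (hu : 0 ≤ u) (k : ℕ) :
    exp (-(lam ρ k * u)) ≤ exp (-(π ^ 4 * u)) ^ (k + 1) := by
  rw [← Real.exp_nat_mul]
  apply Real.exp_le_exp.2
  have h := lam_lb' hρ k
  have : (↑(k + 1) : ℝ) = (k : ℝ) + 1 := by push_cast; ring
  rw [this]
  nlinarith [mul_le_mul_of_nonneg_right h hu]

lemma summable_exp_lam {ρ : ℝ} (hρ : 0 ≤ ρ) {u : ℝ} (hu : 0 < u) :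
    Summable fun k : ℕ => exp (-(lam ρ k * u)) := by
  have hr0 : (0 : ℝ) ≤ exp (-(π ^ 4 * u)) := (exp_pos _).le
  have hr1 : exp (-(π ^ 4 * u)) < 1 := by
    rw [Real.exp_lt_one_iff]
    have : (0 : ℝ) < π ^ 4 * u := by positivity
    linarith
  have hg : Summable fun k : ℕ => exp (-(π ^ 4 * u)) ^ (k + 1) :=
    (summable_nat_add_iff 1).2 (summable_geometric_of_lt_one hr0 hr1)
  exact hg.of_nonneg_of_le (fun k => (exp_pos _).le) (fun k => exp_lam_le hρ hu.le k)

lemma abs_cos_sub_cos (p q : ℝ) : |cos p - cos q| ≤ |p - q| := by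
  rw [Real.cos_sub_cos]
  have hs1 : |sin ((p + q) / 2)| ≤ 1 := abs_sin_le_one _
  have hs2 : |sin ((p - q) / 2)| ≤ |(p - q) / 2| := Real.abs_sin_le_abs
  have h3 : |(p - q) / 2| = |p - q| / 2 := by rw [abs_div]; norm_num
  have h4 : |(-2 : ℝ) * sin ((p + q) / 2) * sin ((p - q) / 2)|
      = 2 * |sin ((p + q) / 2)| * |sin ((p - q) / 2)| := by
    rw [abs_mul, abs_mul]; norm_num
  rw [h4]
  nlinarith [abs_nonneg (sin ((p + q) / 2)), abs_nonneg (sin ((p - q) / 2)), abs_nonneg (p - q)]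

lemma integral_cos_mul {a : ℝ} (ha : a ≠ 0) :
    ∫ y in (0 : ℝ)..1, cos (a * y) = sin a / a := by
  have h := intervalIntegral.integral_comp_mul_left (a := (0 : ℝ)) (b := 1)
    (fun z => cos z) ha
  simp only [mul_zero, mul_one] at h
  rw [h, integral_cos, Real.sin_zero, smul_eq_mul]
  ring

lemma sin_nat_mul_pi' (n : ℤ) : sin ((n : ℝ) * π) = 0 := Real.sin_int_mul_pi n

/-- Orthogonality of the cosine system on `[0,1]`. -/
lemma cos_orth (m n : ℕ) :
    ∫ y in (0 : ℝ)..1, cos (((m : ℝ) + 1) * π * y) * cos (((n : ℝ) + 1) * π * y)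
      = if m = n then 1 / 2 else 0 := by
  have hprod : ∀ y : ℝ, cos (((m : ℝ) + 1) * π * y) * cos (((n : ℝ) + 1) * π * y)
      = (cos ((((m : ℝ) + (n : ℝ) + 2) * π) * y) + cos ((((m : ℝ) - (n : ℝ)) * π) * y)) / 2 := by
    intro y
    have e1 : (((m : ℝ) + (n : ℝ) + 2) * π) * y
        = ((m : ℝ) + 1) * π * y + ((n : ℝ) + 1) * π * y := by ring
    have e2 : (((m : ℝ) - (n : ℝ)) * π) * y
        = ((m : ℝ) + 1) * π * y - ((n : ℝ) + 1) * π * y := by ring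
    rw [e1, e2, Real.cos_add, Real.cos_sub]; ring
  rw [intervalIntegral.integral_congr (g := fun y =>
      (cos ((((m : ℝ) + (n : ℝ) + 2) * π) * y) + cos ((((m : ℝ) - (n : ℝ)) * π) * y)) / 2)
      (fun y _ => hprod y)]
  have hi1 : IntervalIntegrable (fun y => cos ((((m : ℝ) + (n : ℝ) + 2) * π) * y))
      volume 0 1 := (Real.continuous_cos.comp (continuous_const.mul continuous_id)).intervalIntegrable _ _
  have hi2 : IntervalIntegrable (fun y => cos ((((m : ℝ) - (n : ℝ)) * π) * y))
      volume 0 1 := (Real.continuous_cos.comp (continuous_const.mul continuous_id)).intervalIntegrable _ _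
  simp only [div_eq_mul_inv]
  rw [intervalIntegral.integral_mul_const, intervalIntegral.integral_add hi1 hi2]
  have ha1 : ((m : ℝ) + (n : ℝ) + 2) * π ≠ 0 := by
    have : (0:ℝ) < ((m : ℝ) + (n : ℝ) + 2) * π := by positivity
    linarith
  have hint1 : ∫ y in (0:ℝ)..1, cos ((((m : ℝ) + (n : ℝ) + 2) * π) * y) = 0 := by
    rw [integral_cos_mul ha1]
    have : ((m : ℝ) + (n : ℝ) + 2) * π = ((m + n + 2 : ℤ) : ℝ) * π := by push_cast; ring
    rw [this, sin_nat_mul_pi']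
    simp
  by_cases hmn : m = n
  · subst hmn
    have : ∀ y : ℝ, cos ((((m : ℝ) - (m : ℝ)) * π) * y) = 1 := by
      intro y; norm_num
    rw [hint1, intervalIntegral.integral_congr (g := fun _ => (1:ℝ)) (fun y _ => this y)]
    simp
  · have ha2 : ((m : ℝ) - (n : ℝ)) * π ≠ 0 := by
      have hmn' : (m : ℝ) ≠ (n : ℝ) := by exact_mod_cast fun h => hmn (by exact_mod_cast h)
      have : (m : ℝ) - (n : ℝ) ≠ 0 := sub_ne_zero.2 hmn'
      positivity
    have hint2 : ∫ y in (0:ℝ)..1, cos ((((m : ℝ) - (n : ℝ)) * π) * y) = 0 := by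
      rw [integral_cos_mul ha2]
      have : ((m : ℝ) - (n : ℝ)) * π = ((m - n : ℤ) : ℝ) * π := by push_cast; ring
      rw [this, sin_nat_mul_pi']
      simp
    rw [hint1, hint2]
    simp [hmn]




lemma Hker_eq (ρ t x y : ℝ) : Hker ρ t x y
    = 1 + 2 * ∑' k : ℕ, exp (-(lam ρ k * t)) * cos (((k : ℝ) + 1) * π * x)
        * cos (((k : ℝ) + 1) * π * y) := rfl



/-- The coefficient sequence of the kernel difference. -/
noncomputable def cc (ρ u u' x x' : ℝ) (k : ℕ) : ℝ :=
  exp (-(lam ρ k * u)) * cos (((k : ℝ) + 1) * π * x)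
    - exp (-(lam ρ k * u')) * cos (((k : ℝ) + 1) * π * x')

lemma abs_cc_le (ρ u u' x x' : ℝ) (k : ℕ) :
    |cc ρ u u' x x' k| ≤ exp (-(lam ρ k * u)) + exp (-(lam ρ k * u')) := by
  have h1 : |exp (-(lam ρ k * u)) * cos (((k : ℝ) + 1) * π * x)| ≤ exp (-(lam ρ k * u)) := by
    rw [abs_mul, abs_of_pos (exp_pos _)]
    nlinarith [abs_cos_le_one (((k : ℝ) + 1) * π * x), (exp_pos (-(lam ρ k * u))).le,
      abs_nonneg (cos (((k : ℝ) + 1) * π * x))]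
  have h2 : |exp (-(lam ρ k * u')) * cos (((k : ℝ) + 1) * π * x')| ≤ exp (-(lam ρ k * u')) := by
    rw [abs_mul, abs_of_pos (exp_pos _)]
    nlinarith [abs_cos_le_one (((k : ℝ) + 1) * π * x'), (exp_pos (-(lam ρ k * u'))).le,
      abs_nonneg (cos (((k : ℝ) + 1) * π * x'))]
  calc |cc ρ u u' x x' k| ≤ |exp (-(lam ρ k * u)) * cos (((k : ℝ) + 1) * π * x)|
        + |exp (-(lam ρ k * u')) * cos (((k : ℝ) + 1) * π * x')| := abs_sub _ _
    _ ≤ _ := add_le_add h1 h2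

lemma summable_abs_cc {ρ : ℝ} (hρ : 0 ≤ ρ) {u u' : ℝ} (hu : 0 < u) (hu' : 0 < u')
    (x x' : ℝ) : Summable fun k => |cc ρ u u' x x' k| :=
  ((summable_exp_lam hρ hu).add (summable_exp_lam hρ hu')).of_nonneg_of_le
    (fun _ => abs_nonneg _) (abs_cc_le ρ u u' x x')

lemma hker_diff (ρ : ℝ) (hρ : 0 ≤ ρ) {u u' : ℝ} (hu : 0 < u) (hu' : 0 < u')
    (x x' y : ℝ) :
    Hker ρ u x y - Hker ρ u' x' y
      = 2 * ∑' k : ℕ, cc ρ u u' x x' k * cos (((k : ℝ) + 1) * π * y) := by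
  have hb : ∀ (v : ℝ) (z : ℝ), 0 < v → Summable fun k : ℕ =>
      exp (-(lam ρ k * v)) * cos (((k : ℝ) + 1) * π * z) * cos (((k : ℝ) + 1) * π * y) := by
    intro v z hv
    apply (summable_exp_lam hρ hv).of_norm_bounded
    intro k
    rw [Real.norm_eq_abs, abs_mul, abs_mul, abs_of_pos (exp_pos _)]
    have h1 : rexp (-(lam ρ k * v)) * |cos (((k : ℝ) + 1) * π * z)|
        * |cos (((k : ℝ) + 1) * π * y)| ≤ rexp (-(lam ρ k * v)) * 1 * 1 := by
      gcongr
      · exact abs_cos_le_one _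
      · exact abs_cos_le_one _
    simpa using h1
  rw [Hker_eq, Hker_eq]
  have htsub := Summable.tsum_sub (hb u x hu) (hb u' x' hu')
  have h2 : ∀ A B : ℝ, (1 + 2 * A) - (1 + 2 * B) = 2 * (A - B) := by intros; ring
  rw [h2, ← htsub]
  congr 1
  exact tsum_congr fun k => by simp only [cc]; ring

/-- Parseval-type identity for the inner integral. -/
lemma inner_eq (ρ : ℝ) (hρ : 0 ≤ ρ) {u u' : ℝ} (hu : 0 < u) (hu' : 0 < u') (x x' : ℝ) :
    ∫ y in (0 : ℝ)..1, |Hker ρ u x y - Hker ρ u' x' y| ^ 2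
      = 2 * ∑' k : ℕ, (cc ρ u u' x x' k) ^ 2 := by
  set c := cc ρ u u' x x' with hc
  have hsabs : Summable fun k => |c k| := summable_abs_cc hρ hu hu' x x'
  have hsc : Summable c := hsabs.of_abs
  -- pointwise square expansion
  have hsq : ∀ y : ℝ, (Hker ρ u x y - Hker ρ u' x' y) ^ 2
      = 4 * ∑' p : ℕ × ℕ, (c p.1 * cos (((p.1 : ℝ) + 1) * π * y))
          * (c p.2 * cos (((p.2 : ℝ) + 1) * π * y)) := by
    intro y
    rw [hker_diff ρ hρ hu hu' x x' y]
    have hnorm : Summable fun k => ‖c k * cos (((k : ℝ) + 1) * π * y)‖ := by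
      apply hsabs.of_nonneg_of_le (fun k => norm_nonneg _)
      intro k
      rw [Real.norm_eq_abs, abs_mul]
      nlinarith [abs_cos_le_one (((k : ℝ) + 1) * π * y), abs_nonneg (c k),
        abs_nonneg (cos (((k : ℝ) + 1) * π * y))]
    have hsf : Summable fun k => c k * cos (((k : ℝ) + 1) * π * y) := hnorm.of_norm
    have hprod : Summable fun p : ℕ × ℕ =>
        (c p.1 * cos (((p.1 : ℝ) + 1) * π * y)) * (c p.2 * cos (((p.2 : ℝ) + 1) * π * y)) :=
      summable_mul_of_summable_norm hnorm hnorm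
    have hmt := Summable.tsum_mul_tsum hsf hsf hprod
    rw [← hc]
    rw [mul_pow, pow_two (∑' k : ℕ, c k * cos (((k : ℝ) + 1) * π * y)), hmt]
    norm_num
  have hDeq : (fun y => |Hker ρ u x y - Hker ρ u' x' y| ^ 2)
      = fun y => 4 * ∑' p : ℕ × ℕ, (c p.1 * cos (((p.1 : ℝ) + 1) * π * y))
          * (c p.2 * cos (((p.2 : ℝ) + 1) * π * y)) := by
    funext y; rw [sq_abs]; exact hsq y
  rw [intervalIntegral.integral_of_le zero_le_one, hDeq, integral_const_mul]
  -- interchange sum and integral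
  have habs2 : Summable fun p : ℕ × ℕ => |c p.1| * |c p.2| :=
    hsabs.mul_of_nonneg hsabs (fun k => abs_nonneg _) (fun k => abs_nonneg _)
  have hmeas : ∀ p : ℕ × ℕ, AEStronglyMeasurable
      (fun y => (c p.1 * cos (((p.1 : ℝ) + 1) * π * y))
        * (c p.2 * cos (((p.2 : ℝ) + 1) * π * y))) (volume.restrict (Set.Ioc (0:ℝ) 1)) := by
    intro p
    have hcos : ∀ a : ℝ, Continuous fun y : ℝ => cos (a * π * y) := fun a =>
      Real.continuous_cos.comp (continuous_const.mul continuous_id)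
    exact (((continuous_const.mul (hcos _)).mul
      (continuous_const.mul (hcos _)))).aestronglyMeasurable
  have hfin : (∑' p : ℕ × ℕ, ∫⁻ y in Set.Ioc (0:ℝ) 1,
      ‖(c p.1 * cos (((p.1 : ℝ) + 1) * π * y))
        * (c p.2 * cos (((p.2 : ℝ) + 1) * π * y))‖₊) ≠ ⊤ := by
    have hb : ∀ p : ℕ × ℕ, (∫⁻ y in Set.Ioc (0:ℝ) 1,
        ‖(c p.1 * cos (((p.1 : ℝ) + 1) * π * y))
          * (c p.2 * cos (((p.2 : ℝ) + 1) * π * y))‖₊)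
        ≤ (‖c p.1 * c p.2‖₊ : ℝ≥0∞) := by
      intro p
      have : (∫⁻ y in Set.Ioc (0:ℝ) 1, (‖c p.1 * c p.2‖₊ : ℝ≥0∞))
          = (‖c p.1 * c p.2‖₊ : ℝ≥0∞) := by
        rw [MeasureTheory.lintegral_const, Measure.restrict_apply_univ, Real.volume_Ioc]
        norm_num
      rw [← this]
      apply lintegral_mono
      intro y
      rw [ENNReal.coe_le_coe, ← NNReal.coe_le_coe, coe_nnnorm, coe_nnnorm,
        Real.norm_eq_abs, Real.norm_eq_abs]
      calc |c p.1 * cos (((p.1 : ℝ) + 1) * π * y) * (c p.2 * cos (((p.2 : ℝ) + 1) * π * y))|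
          = |c p.1| * |cos (((p.1 : ℝ) + 1) * π * y)|
            * (|c p.2| * |cos (((p.2 : ℝ) + 1) * π * y)|) := by
            rw [abs_mul, abs_mul, abs_mul]
        _ ≤ |c p.1| * 1 * (|c p.2| * 1) := by
            gcongr
            · exact abs_cos_le_one _
            · exact abs_cos_le_one _
        _ = |c p.1 * c p.2| := by rw [abs_mul]; ring
    have hsum : Summable fun p : ℕ × ℕ => ‖c p.1 * c p.2‖₊ := by
      rw [← NNReal.summable_coe]
      have : (fun p : ℕ × ℕ => (‖c p.1 * c p.2‖₊ : ℝ)) = fun p : ℕ × ℕ => |c p.1| * |c p.2| := by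
        funext p; rw [coe_nnnorm, Real.norm_eq_abs, abs_mul]
      rw [this]
      exact habs2
    exact ne_top_of_le_ne_top (ENNReal.tsum_coe_ne_top_iff_summable.2 hsum)
      (ENNReal.tsum_le_tsum hb)
  rw [MeasureTheory.integral_tsum hmeas hfin]
  -- evaluate each integral
  have hint : ∀ p : ℕ × ℕ, (∫ y in Set.Ioc (0:ℝ) 1,
      (c p.1 * cos (((p.1 : ℝ) + 1) * π * y)) * (c p.2 * cos (((p.2 : ℝ) + 1) * π * y)))
      = if p.1 = p.2 then c p.1 * c p.1 * (1/2) else 0 := by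
    intro p
    have hcongr : ∀ y : ℝ, (c p.1 * cos (((p.1 : ℝ) + 1) * π * y))
        * (c p.2 * cos (((p.2 : ℝ) + 1) * π * y))
        = (c p.1 * c p.2) * (cos (((p.1 : ℝ) + 1) * π * y) * cos (((p.2 : ℝ) + 1) * π * y)) := by
      intro y; ring
    simp_rw [hcongr]
    rw [integral_const_mul _ _, ← intervalIntegral.integral_of_le zero_le_one,
      cos_orth]
    by_cases h : p.1 = p.2
    · rw [if_pos h, if_pos h, ← h]
    · rw [if_neg h, if_neg h, mul_zero]
  rw [tsum_congr hint]
  -- sum the diagonal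
  have hsite : Summable fun p : ℕ × ℕ => (if p.1 = p.2 then c p.1 * c p.1 * (1/2) else 0) := by
    apply habs2.of_nonneg_of_le
    · intro p
      by_cases h : p.1 = p.2
      · simp only [if_pos h]
        nlinarith [mul_self_nonneg (c p.1)]
      · simp only [if_neg h]
        exact le_rfl
    · intro p
      by_cases h : p.1 = p.2
      · obtain ⟨p1, p2⟩ := p
        simp only at h
        subst h
        rw [if_pos rfl]
        nlinarith [mul_self_nonneg (c p1), abs_mul_abs_self (c p1)]
      · simp only [if_neg h]
        positivity
  have heq : ∀ b : ℕ, (fun j : ℕ => if (b, j).1 = (b, j).2 then c (b, j).1 * c (b, j).1 * (1/2) else 0)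
      = fun j : ℕ => if j = b then c b * c b * (1/2) else 0 := by
    intro b
    funext j
    by_cases h : j = b
    · subst h; simp
    · have h' : b ≠ j := fun hh => h hh.symm
      simp [h, h']
  have hinner : ∀ b : ℕ, Summable fun j : ℕ =>
      if (b, j).1 = (b, j).2 then c (b, j).1 * c (b, j).1 * (1/2) else 0 := by
    intro b
    rw [heq b]
    exact (hasSum_ite_eq b _).summable
  rw [Summable.tsum_prod' hsite hinner]
  have hrow : ∀ b : ℕ, (∑' j : ℕ, if (b, j).1 = (b, j).2 then c (b, j).1 * c (b, j).1 * (1/2) else 0)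
      = c b * c b * (1/2) := by
    intro b
    rw [heq b, tsum_ite_eq]
  rw [tsum_congr hrow]
  have : (fun b : ℕ => c b * c b * (1/2)) = fun b : ℕ => (c b)^2 * (1/2) := by
    funext b; ring
  rw [this, tsum_mul_right]
  ring






lemma exp_integral_le {L t : ℝ} (hL : 0 < L) (ht : 0 < t) :
    ∫ s in Set.Ioc (0:ℝ) t, exp (2 * L * (s - t)) ≤ 1 / (2 * L) := by
  rw [← intervalIntegral.integral_of_le ht.le]
  have h1 : (∫ s in (0:ℝ)..t, exp (2 * L * (s - t)))
      = ∫ u in (0:ℝ) - t..t - t, exp (2 * L * u) :=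
    intervalIntegral.integral_comp_sub_right (fun u => exp (2 * L * u)) t
  have h2 : (∫ u in (0:ℝ) - t..t - t, exp (2 * L * u))
      = (2 * L)⁻¹ • ∫ v in (2 * L * ((0:ℝ) - t))..(2 * L * (t - t)), exp v :=
    intervalIntegral.integral_comp_mul_left (fun v => exp v) (by positivity)
  rw [h1, h2, integral_exp, smul_eq_mul]
  have h3 : exp (2 * L * (t - t)) = 1 := by norm_num
  have h4 : 0 < exp (2 * L * ((0:ℝ) - t)) := exp_pos _
  rw [h3]
  have h5 : (2*L)⁻¹ * (1 - exp (2*L*((0:ℝ)-t))) ≤ (2*L)⁻¹ * 1 :=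
    mul_le_mul_of_nonneg_left (by linarith) (by positivity)
  rw [one_div]
  linarith

lemma Ik_bound (ρ γ : ℝ) (hρ : 0 ≤ ρ) (hγ0 : 0 < γ) (hγ1 : γ ≤ 1) {t t' : ℝ} (x x' : ℝ)
    (ht : 0 < t) (htt' : t ≤ t') (k : ℕ) :
    (∫ s in Set.Ioc (0:ℝ) t, 2 * (cc ρ (t - s) (t' - s) x x' k) ^ 2)
      ≤ 2 * (π ^ 4 * ((k : ℝ) + 1) ^ 4) ^ (γ - 1) * (t' - t) ^ γ
        + 2 / (π ^ 2 * ((k : ℝ) + 1) ^ 2) * (x - x') ^ 2 := by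
  have hL : 0 < lam ρ k := lam_pos hρ k
  have hL4 : π ^ 4 * ((k : ℝ) + 1) ^ 4 ≤ lam ρ k := lam_lb hρ k
  set L := lam ρ k with hLdef
  set δ := t' - t with hδdef
  have hδ : 0 ≤ δ := by simp only [hδdef]; linarith
  set E := exp (-(L * δ)) with hEdef
  have hE0 : 0 < E := exp_pos _
  have hE1 : E ≤ 1 := by
    rw [hEdef, Real.exp_le_one_iff]
    nlinarith
  set Q := 4 * (1 - E) ^ 2 + 4 * ((k : ℝ) + 1) ^ 2 * π ^ 2 * (x - x') ^ 2 with hQdef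
  have hQ0 : 0 ≤ Q := by
    simp only [hQdef]
    positivity
  -- pointwise bound
  have hpt : ∀ s ∈ Set.Ioc (0:ℝ) t, 2 * (cc ρ (t - s) (t' - s) x x' k) ^ 2
      ≤ Q * exp (2 * L * (s - t)) := by
    intro s hs
    have hst : s ≤ t := hs.2
    set a := exp (-(L * (t - s))) with ha
    have ha0 : 0 < a := exp_pos _
    have hb : exp (-(L * (t' - s))) = a * E := by
      rw [ha, hEdef, ← Real.exp_add]
      congr 1
      rw [hδdef]
      ring
    have ha2 : exp (2 * L * (s - t)) = a ^ 2 := by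
      rw [pow_two, ha, ← Real.exp_add]
      congr 1
      ring
    have hcosd : (cos (((k:ℝ)+1) * π * x) - cos (((k:ℝ)+1) * π * x')) ^ 2
        ≤ ((k:ℝ)+1) ^ 2 * π ^ 2 * (x - x') ^ 2 := by
      have h1 := abs_cos_sub_cos (((k:ℝ)+1) * π * x) (((k:ℝ)+1) * π * x')
      have h2 : |((k:ℝ)+1) * π * x - ((k:ℝ)+1) * π * x'| = ((k:ℝ)+1) * π * |x - x'| := by
        rw [show ((k:ℝ)+1) * π * x - ((k:ℝ)+1) * π * x' = (((k:ℝ)+1) * π) * (x - x') from by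
          ring, abs_mul]
        congr 1
        exact abs_of_pos (by positivity)
      rw [h2] at h1
      calc (cos (((k:ℝ)+1) * π * x) - cos (((k:ℝ)+1) * π * x')) ^ 2
          = |cos (((k:ℝ)+1) * π * x) - cos (((k:ℝ)+1) * π * x')| ^ 2 := (sq_abs _).symm
        _ ≤ (((k:ℝ)+1) * π * |x - x'|) ^ 2 := by
            apply pow_le_pow_left₀ (abs_nonneg _) h1
        _ = ((k:ℝ)+1) ^ 2 * π ^ 2 * (x - x') ^ 2 := by
            rw [mul_pow, mul_pow, sq_abs]
    have hccval : cc ρ (t - s) (t' - s) x x' k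
        = a * (cos (((k:ℝ)+1) * π * x) - cos (((k:ℝ)+1) * π * x'))
          + a * (1 - E) * cos (((k:ℝ)+1) * π * x') := by
      simp only [cc, ← hLdef, ← ha, hb]
      ring
    rw [hccval, ha2]
    set p := a * (cos (((k:ℝ)+1) * π * x) - cos (((k:ℝ)+1) * π * x')) with hp
    set q := a * (1 - E) * cos (((k:ℝ)+1) * π * x') with hq
    have h4 : 2 * (p + q) ^ 2 ≤ 4 * p ^ 2 + 4 * q ^ 2 := by nlinarith [sq_nonneg (p - q)]
    have hpb : p ^ 2 ≤ a ^ 2 * (((k:ℝ)+1) ^ 2 * π ^ 2 * (x - x') ^ 2) := by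
      have : p ^ 2 = a ^ 2 * (cos (((k:ℝ)+1) * π * x) - cos (((k:ℝ)+1) * π * x')) ^ 2 := by
        rw [hp]; ring
      rw [this]
      exact mul_le_mul_of_nonneg_left hcosd (sq_nonneg a)
    have hqb : q ^ 2 ≤ a ^ 2 * (1 - E) ^ 2 := by
      have hq2 : q ^ 2 = a ^ 2 * (1 - E) ^ 2 * cos (((k:ℝ)+1) * π * x') ^ 2 := by
        rw [hq]; ring
      have hc2 : cos (((k:ℝ)+1) * π * x') ^ 2 ≤ 1 := Real.cos_sq_le_one _
      nlinarith [sq_nonneg (a * (1 - E))]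
    simp only [hQdef]
    nlinarith [h4, hpb, hqb]
  -- integrate
  have hcont : Continuous fun s : ℝ => 2 * (cc ρ (t - s) (t' - s) x x' k) ^ 2 := by
    simp only [cc]
    fun_prop
  have hcont2 : Continuous fun s : ℝ => Q * exp (2 * L * (s - t)) := by fun_prop
  have hIle : (∫ s in Set.Ioc (0:ℝ) t, 2 * (cc ρ (t - s) (t' - s) x x' k) ^ 2)
      ≤ ∫ s in Set.Ioc (0:ℝ) t, Q * exp (2 * L * (s - t)) :=
    setIntegral_mono_on (hcont.integrableOn_Ioc) (hcont2.integrableOn_Ioc)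
      measurableSet_Ioc hpt
  have hQint : (∫ s in Set.Ioc (0:ℝ) t, Q * exp (2 * L * (s - t))) ≤ Q * (1 / (2 * L)) := by
    rw [integral_const_mul]
    exact mul_le_mul_of_nonneg_left (exp_integral_le hL ht) hQ0
  -- final algebra
  have h1E : (1 - E) ^ 2 ≤ L ^ γ * δ ^ γ := by
    have hz : 0 ≤ L * δ := by positivity
    have key : (1 - E) ^ 2 ≤ (L * δ) ^ γ := by
      by_cases hz1 : L * δ ≤ 1
      · have hle : 1 - E ≤ L * δ := by
          have := Real.add_one_le_exp (-(L * δ))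
          simp only [hEdef]
          linarith
        have h0 : 0 ≤ 1 - E := by linarith
        have hsq : (1 - E) ^ 2 ≤ (L * δ) ^ (2:ℕ) := pow_le_pow_left₀ h0 hle 2
        rcases eq_or_lt_of_le hz with h0' | h0'
        · rw [← h0']
          rw [Real.zero_rpow (by linarith : γ ≠ 0)]
          simpa [← h0'] using hsq
        · calc (1 - E) ^ 2 ≤ (L * δ) ^ (2:ℕ) := hsq
            _ = (L * δ) ^ ((2:ℕ):ℝ) := (Real.rpow_natCast _ 2).symm
            _ ≤ (L * δ) ^ γ := by
                apply Real.rpow_le_rpow_of_exponent_ge h0' hz1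
                push_cast
                linarith
      · push_neg at hz1
        have hE2 : (1 - E) ^ 2 ≤ 1 := by nlinarith
        calc (1 - E) ^ 2 ≤ 1 := hE2
          _ ≤ (L * δ) ^ γ := Real.one_le_rpow hz1.le hγ0.le
    calc (1 - E) ^ 2 ≤ (L * δ) ^ γ := key
      _ = L ^ γ * δ ^ γ := Real.mul_rpow hL.le hδ
  have hLγ : L ^ (γ - 1) ≤ (π ^ 4 * ((k : ℝ) + 1) ^ 4) ^ (γ - 1) :=
    Real.rpow_le_rpow_of_nonpos (by positivity) hL4 (by linarith)
  have hδγ0 : 0 ≤ δ ^ γ := Real.rpow_nonneg hδ γ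
  have hfin : Q * (1 / (2 * L)) ≤ 2 * (π ^ 4 * ((k : ℝ) + 1) ^ 4) ^ (γ - 1) * δ ^ γ
      + 2 / (π ^ 2 * ((k : ℝ) + 1) ^ 2) * (x - x') ^ 2 := by
    have hsplit : Q * (1 / (2 * L)) = 2 * (1 - E) ^ 2 / L
        + 2 * ((k : ℝ) + 1) ^ 2 * π ^ 2 * (x - x') ^ 2 / L := by
      simp only [hQdef]
      field_simp
      ring
    have hterm1 : 2 * (1 - E) ^ 2 / L ≤ 2 * (π ^ 4 * ((k : ℝ) + 1) ^ 4) ^ (γ - 1) * δ ^ γ := by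
      have hs1 : 2 * (1 - E) ^ 2 / L ≤ 2 * (L ^ γ * δ ^ γ) / L :=
        (div_le_div_iff_of_pos_right hL).2 (by linarith [h1E])
      have hs2 : 2 * (L ^ γ * δ ^ γ) / L = 2 * L ^ (γ - 1) * δ ^ γ := by
        rw [Real.rpow_sub hL, Real.rpow_one]
        field_simp
      have hs3 : 2 * L ^ (γ - 1) * δ ^ γ ≤ 2 * (π ^ 4 * ((k : ℝ) + 1) ^ 4) ^ (γ - 1) * δ ^ γ := by
        apply mul_le_mul_of_nonneg_right ?_ hδγ0
        linarith [hLγ]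
      calc 2 * (1 - E) ^ 2 / L ≤ 2 * (L ^ γ * δ ^ γ) / L := hs1
        _ = 2 * L ^ (γ - 1) * δ ^ γ := hs2
        _ ≤ _ := hs3
    have hterm2 : 2 * ((k:ℝ)+1) ^ 2 * π ^ 2 * (x - x') ^ 2 / L
        ≤ 2 / (π ^ 2 * ((k:ℝ)+1) ^ 2) * (x - x') ^ 2 := by
      have hd4 : (0:ℝ) < π ^ 4 * ((k:ℝ)+1) ^ 4 := by positivity
      have key : 2 * ((k:ℝ)+1) ^ 2 * π ^ 2 / L ≤ 2 / (π ^ 2 * ((k:ℝ)+1) ^ 2) := by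
        have h' : 2 * ((k:ℝ)+1) ^ 2 * π ^ 2 / L
            ≤ 2 * ((k:ℝ)+1) ^ 2 * π ^ 2 / (π ^ 4 * ((k:ℝ)+1) ^ 4) := by
          gcongr
        have h'' : 2 * ((k:ℝ)+1) ^ 2 * π ^ 2 / (π ^ 4 * ((k:ℝ)+1) ^ 4)
            = 2 / (π ^ 2 * ((k:ℝ)+1) ^ 2) := by
          have hπ : π ≠ 0 := Real.pi_ne_zero
          have hk1 : ((k:ℝ)+1) ≠ 0 := by positivity
          field_simp
        linarith
      calc 2 * ((k:ℝ)+1) ^ 2 * π ^ 2 * (x - x') ^ 2 / L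
          = (2 * ((k:ℝ)+1) ^ 2 * π ^ 2 / L) * (x - x') ^ 2 := by ring
        _ ≤ (2 / (π ^ 2 * ((k:ℝ)+1) ^ 2)) * (x - x') ^ 2 :=
            mul_le_mul_of_nonneg_right key (sq_nonneg _)
    rw [hsplit]
    linarith [hterm1, hterm2]
  calc (∫ s in Set.Ioc (0:ℝ) t, 2 * (cc ρ (t - s) (t' - s) x x' k) ^ 2)
      ≤ Q * (1 / (2 * L)) := hIle.trans hQint
    _ ≤ _ := hfin







lemma summable_shift_rpow {p : ℝ} (hp : p < -1) :
    Summable fun k : ℕ => ((k : ℝ) + 1) ^ p := by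
  have h0 : Summable fun n : ℕ => ((n : ℝ)) ^ p := summable_nat_rpow.2 hp
  have h1 := (summable_nat_add_iff 1).2 h0
  apply h1.congr
  intro n
  push_cast
  ring_nf

lemma summable_A {γ : ℝ} (hγ1 : γ < 3 / 4) :
    Summable fun k : ℕ => 2 * (π ^ 4 * ((k : ℝ) + 1) ^ 4) ^ (γ - 1) := by
  have heq : ∀ k : ℕ, (π ^ 4 * ((k : ℝ) + 1) ^ 4) ^ (γ - 1)
      = (π ^ 4) ^ (γ - 1) * ((k : ℝ) + 1) ^ ((4:ℝ) * (γ - 1)) := by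
    intro k
    rw [Real.mul_rpow (by positivity) (by positivity)]
    congr 1
    rw [← Real.rpow_natCast ((k : ℝ) + 1) 4, ← Real.rpow_mul (by positivity)]
    norm_num
  have hs0 : Summable fun k : ℕ => ((k : ℝ) + 1) ^ ((4:ℝ) * (γ - 1)) :=
    summable_shift_rpow (by linarith)
  have := (hs0.mul_left ((π ^ 4) ^ (γ - 1))).mul_left 2
  apply this.congr
  intro k
  rw [heq k]

lemma summable_B : Summable fun k : ℕ => 2 / (π ^ 2 * ((k : ℝ) + 1) ^ 2) := by
  have hs0 : Summable fun k : ℕ => ((k : ℝ) + 1) ^ ((-2:ℝ)) :=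
    summable_shift_rpow (by norm_num)
  have := (hs0.mul_left (2 / π ^ 2))
  apply this.congr
  intro k
  have hk1 : (0:ℝ) < (k : ℝ) + 1 := by positivity
  rw [Real.rpow_neg hk1.le, show ((2:ℝ)) = ((2:ℕ):ℝ) by norm_num, Real.rpow_natCast]
  have hπ : π ≠ 0 := Real.pi_ne_zero
  field_simp


end FourthKernelAux

open FourthKernelAux


open FourthKernelAux

theorem fourth_order_kernel_space_time_increment (ρ : ℝ) (hρ : 0 ≤ ρ)
    (γ : ℝ) (hγ0 : 0 < γ) (hγ1 : γ < 3 / 4) (T : ℝ) (hT : 0 < T) :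
    ∃ C : ℝ, 0 < C ∧ ∀ t t' x x' : ℝ, 0 < t → t ≤ t' → t' ≤ T →
      x ∈ Set.Icc (0 : ℝ) 1 → x' ∈ Set.Icc (0 : ℝ) 1 →
      (∫ s in (0 : ℝ)..t, ∫ y in (0 : ℝ)..1,
          |Hker ρ (t - s) x y - Hker ρ (t' - s) x' y| ^ 2) ≤
        C * (|t - t'| ^ γ + |x - x'| ^ 2) := by
  have hγle1 : γ ≤ 1 := by linarith
  set A : ℕ → ℝ := fun k => 2 * (π ^ 4 * ((k : ℝ) + 1) ^ 4) ^ (γ - 1) with hA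
  set B : ℕ → ℝ := fun k => 2 / (π ^ 2 * ((k : ℝ) + 1) ^ 2) with hB
  have hsA : Summable A := summable_A hγ1
  have hsB : Summable B := summable_B
  have hA0 : ∀ k, 0 ≤ A k := fun k => by simp only [hA]; positivity
  have hB0 : ∀ k, 0 ≤ B k := fun k => by simp only [hB]; positivity
  have htA0 : 0 ≤ ∑' k, A k := tsum_nonneg hA0
  have htB0 : 0 ≤ ∑' k, B k := tsum_nonneg hB0
  refine ⟨(∑' k, A k) + (∑' k, B k) + 1, by linarith, ?_⟩
  intro t t' x x' ht htt' ht'T hx hx'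
  have habs_t : |t - t'| = t' - t := by
    rw [abs_sub_comm]
    exact abs_of_nonneg (by linarith)
  have habs_x : |x - x'| ^ 2 = (x - x') ^ 2 := sq_abs _
  rw [habs_t, habs_x, intervalIntegral.integral_of_le ht.le]
  -- a.e. identification of the inner integral
  have hae : ∀ᵐ s ∂(volume.restrict (Set.Ioc (0:ℝ) t)),
      (∫ y in (0:ℝ)..1, |Hker ρ (t - s) x y - Hker ρ (t' - s) x' y| ^ 2)
      = ∑' k : ℕ, 2 * (cc ρ (t - s) (t' - s) x x' k) ^ 2 := by
    have hmem : ∀ᵐ s ∂(volume.restrict (Set.Ioc (0:ℝ) t)), s ∈ Set.Ioc (0:ℝ) t :=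
      ae_restrict_mem measurableSet_Ioc
    have hne : ∀ᵐ s ∂(volume.restrict (Set.Ioc (0:ℝ) t)), s ≠ t := by
      apply ae_restrict_of_ae
      have hset : {s : ℝ | ¬ s ≠ t} = {t} := by
        ext s; simp [not_not]
      rw [ae_iff, hset]
      exact measure_singleton t
    filter_upwards [hmem, hne] with s hs hst
    have h1 : 0 < t - s := sub_pos.2 (lt_of_le_of_ne hs.2 hst)
    have h2 : 0 < t' - s := by linarith
    rw [inner_eq ρ hρ h1 h2 x x']
    exact tsum_mul_left.symm
  rw [integral_congr_ae hae]
  -- interchange integral and sum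
  have hmeas2 : ∀ k : ℕ, AEStronglyMeasurable
      (fun s => 2 * (cc ρ (t - s) (t' - s) x x' k) ^ 2)
      (volume.restrict (Set.Ioc (0:ℝ) t)) := by
    intro k
    apply Continuous.aestronglyMeasurable
    simp only [cc]
    fun_prop
  have hIk : ∀ k : ℕ, (∫ s in Set.Ioc (0:ℝ) t, 2 * (cc ρ (t - s) (t' - s) x x' k) ^ 2)
      ≤ A k * (t' - t) ^ γ + B k * (x - x') ^ 2 := by
    intro k
    have h := Ik_bound ρ γ hρ hγ0 hγle1 x x' ht htt' k
    simp only [hA, hB]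
    exact h
  have hIk0 : ∀ k : ℕ, 0 ≤ ∫ s in Set.Ioc (0:ℝ) t, 2 * (cc ρ (t - s) (t' - s) x x' k) ^ 2 :=
    fun k => setIntegral_nonneg measurableSet_Ioc (fun s _ => by positivity)
  have hsm : Summable fun k => A k * (t' - t) ^ γ + B k * (x - x') ^ 2 :=
    (hsA.mul_right _).add (hsB.mul_right _)
  have hsI : Summable fun k => ∫ s in Set.Ioc (0:ℝ) t, 2 * (cc ρ (t - s) (t' - s) x x' k) ^ 2 :=
    hsm.of_nonneg_of_le hIk0 hIk
  have hm0 : ∀ k : ℕ, 0 ≤ A k * (t' - t) ^ γ + B k * (x - x') ^ 2 := by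
    intro k
    have h1 : 0 ≤ (t' - t) ^ γ := Real.rpow_nonneg (by linarith) γ
    have h2 : 0 ≤ (x - x') ^ 2 := sq_nonneg _
    have := hA0 k; have := hB0 k
    positivity
  have hfin2 : (∑' k : ℕ, ∫⁻ s in Set.Ioc (0:ℝ) t,
      ‖2 * (cc ρ (t - s) (t' - s) x x' k) ^ 2‖₊) ≠ ⊤ := by
    have heach : ∀ k : ℕ, (∫⁻ s in Set.Ioc (0:ℝ) t,
        ‖2 * (cc ρ (t - s) (t' - s) x x' k) ^ 2‖₊)
        = ENNReal.ofReal (∫ s in Set.Ioc (0:ℝ) t, 2 * (cc ρ (t - s) (t' - s) x x' k) ^ 2) := by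
      intro k
      have hcont : Continuous fun s : ℝ => 2 * (cc ρ (t - s) (t' - s) x x' k) ^ 2 := by
        simp only [cc]
        fun_prop
      have hInt : IntegrableOn (fun s : ℝ => 2 * (cc ρ (t - s) (t' - s) x x' k) ^ 2)
          (Set.Ioc (0:ℝ) t) volume := hcont.integrableOn_Ioc
      rw [ofReal_integral_eq_lintegral_ofReal hInt
        (Filter.Eventually.of_forall (fun s => by positivity))]
      apply lintegral_congr
      intro s
      exact Real.enorm_eq_ofReal (by positivity)
    rw [tsum_congr heach]
    have hle : (∑' k : ℕ, ENNReal.ofReal (∫ s in Set.Ioc (0:ℝ) t,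
        2 * (cc ρ (t - s) (t' - s) x x' k) ^ 2))
        ≤ ∑' k : ℕ, ENNReal.ofReal (A k * (t' - t) ^ γ + B k * (x - x') ^ 2) :=
      ENNReal.tsum_le_tsum (fun k => ENNReal.ofReal_le_ofReal (hIk k))
    have heq2 : (∑' k : ℕ, ENNReal.ofReal (A k * (t' - t) ^ γ + B k * (x - x') ^ 2))
        = ENNReal.ofReal (∑' k : ℕ, (A k * (t' - t) ^ γ + B k * (x - x') ^ 2)) :=
      (ENNReal.ofReal_tsum_of_nonneg hm0 hsm).symm
    rw [heq2] at hle
    exact ne_top_of_le_ne_top ENNReal.ofReal_ne_top hle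
  rw [MeasureTheory.integral_tsum hmeas2 hfin2]
  -- final estimate
  have hsum_le : (∑' k : ℕ, ∫ s in Set.Ioc (0:ℝ) t, 2 * (cc ρ (t - s) (t' - s) x x' k) ^ 2)
      ≤ (∑' k, A k) * (t' - t) ^ γ + (∑' k, B k) * (x - x') ^ 2 := by
    calc (∑' k : ℕ, ∫ s in Set.Ioc (0:ℝ) t, 2 * (cc ρ (t - s) (t' - s) x x' k) ^ 2)
        ≤ ∑' k : ℕ, (A k * (t' - t) ^ γ + B k * (x - x') ^ 2) := Summable.tsum_le_tsum hIk hsI hsm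
      _ = (∑' k : ℕ, A k * (t' - t) ^ γ) + ∑' k : ℕ, B k * (x - x') ^ 2 :=
          Summable.tsum_add (hsA.mul_right _) (hsB.mul_right _)
      _ = (∑' k, A k) * (t' - t) ^ γ + (∑' k, B k) * (x - x') ^ 2 := by
          rw [tsum_mul_right, tsum_mul_right]
  have hδγ0 : 0 ≤ (t' - t) ^ γ := Real.rpow_nonneg (by linarith) γ
  have hx20 : 0 ≤ (x - x') ^ 2 := sq_nonneg _
  nlinarith [hsum_le, mul_nonneg htA0 hx20, mul_nonneg htB0 hδγ0]
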